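/- Let (β̂₁, β̂₂) be Kyle's two-period equilibrium: b̂₁ ∈ (0,1) the unique solution of 1 = b̂₁²/((1 − b̂₁²)²(1 + b̂₁²)), b̂₂ := 1, Σ̂₀ := Σ₀, Σ̂₁ := Σ̂₀/(1 + b̂₁²), β̂₁ := b̂₁σᵤ/√(Σ̂₀Δ), β̂₂ := b̂₂σᵤ/√(Σ̂₁Δ). Then T is differentiable at (β̂₁, β̂₂) and the partial derivatives with respect to β₂ of both coordinates vanish there: ∂T₁/∂β₂(β̂₁, β̂₂) = 0 and ∂T₂/∂β₂(β̂₁, β̂₂) = 0; i.e., the second column of the Jacobian matrix of T at (β̂₁, β̂₂) is zero. -/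

import Mathlib

/-- First coordinate of the two-period policy-iteration map. -/
noncomputable def T2p1 (Δ σu Sig0 β1 β2 : ℝ) : ℝ :=
  (β1 ^ 2 * Δ * Sig0 + σu ^ 2) *
      (β1 * Δ * Sig0 * (β1 - β2) ^ 2 + σu ^ 2 * (β1 - 2 * β2)) /
    (β1 * Δ * Sig0 *
      (β1 * Δ * Sig0 * (β1 ^ 2 - 4 * β1 * β2 + β2 ^ 2) + σu ^ 2 * (β1 - 4 * β2)))

/-- Second coordinate of the two-period policy-iteration map. -/
noncomputable def T2p2 (Δ σu Sig0 β1 β2 : ℝ) : ℝ :=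
  (Δ * Sig0 * (β1 ^ 2 + β2 ^ 2) + σu ^ 2) / (2 * β2 * Δ * Sig0)

/-! As functions of `β₂`, both coordinates of `T` are quotients of quadratics, and the
critical-point condition `N' D = N D'` of each factors through `ΔΣ₀ β₂² - ΔΣ₀ β₁² - σᵤ²`.
The equilibrium lies on the curve where this vanishes, since `Σ̂₁ = Σ̂₀ / (1 + b̂₁²)` gives
`ΔΣ₀ β̂₂² = (1 + b̂₁²) σᵤ² = ΔΣ₀ β̂₁² + σᵤ²`. On that curve the denominator of `T₁` is
`2 (ΔΣ₀)² β₁ β₂² (β₁ - 2β₂)`, nonzero because `0 < β₁ ≤ β₂`. -/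

theorem hasDerivAt_quadratic (a b c x : ℝ) :
    HasDerivAt (fun y => a * y ^ 2 + b * y + c) (2 * a * x + b) x := by
  refine ((((hasDerivAt_pow 2 x).const_mul a).add ((hasDerivAt_id' x).const_mul b)).add_const
    c).congr_deriv ?_
  norm_num
  ring

theorem hasDerivAt_div_quadratic_eq_zero {a b c d e f x : ℝ} (hq : d * x ^ 2 + e * x + f ≠ 0)
    (hcrit : (2 * a * x + b) * (d * x ^ 2 + e * x + f) =
      (a * x ^ 2 + b * x + c) * (2 * d * x + e)) :
    HasDerivAt (fun y => (a * y ^ 2 + b * y + c) / (d * y ^ 2 + e * y + f)) 0 x := by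
  refine ((hasDerivAt_quadratic a b c x).div (hasDerivAt_quadratic d e f x) hq).congr_deriv ?_
  rw [hcrit, sub_self, zero_div]

section Curve

variable {Δ σu Sig0 β1 β2 : ℝ}

theorem T2p1_denom_eq_of_curve (hcurve : Δ * Sig0 * β2 ^ 2 = Δ * Sig0 * β1 ^ 2 + σu ^ 2) :
    β1 * Δ * Sig0 * (β1 * Δ * Sig0 * (β1 ^ 2 - 4 * β1 * β2 + β2 ^ 2) + σu ^ 2 * (β1 - 4 * β2)) =
      2 * (Δ * Sig0) ^ 2 * β1 * β2 ^ 2 * (β1 - 2 * β2) := by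
  linear_combination -(β1 * Δ * Sig0 * (β1 - 4 * β2)) * hcurve

theorem T2p1_denom_ne_zero_of_curve (hK : 0 < Δ * Sig0) (hβ1 : 0 < β1) (hβ2 : 0 < β2)
    (hcurve : Δ * Sig0 * β2 ^ 2 = Δ * Sig0 * β1 ^ 2 + σu ^ 2) :
    β1 * Δ * Sig0 * (β1 * Δ * Sig0 * (β1 ^ 2 - 4 * β1 * β2 + β2 ^ 2) +
      σu ^ 2 * (β1 - 4 * β2)) ≠ 0 := by
  rw [T2p1_denom_eq_of_curve hcurve]
  have hsq : β1 ^ 2 ≤ β2 ^ 2 := le_of_mul_le_mul_left (by nlinarith [sq_nonneg σu]) hK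
  have hle : β1 ≤ β2 := (pow_le_pow_iff_left₀ hβ1.le hβ2.le two_ne_zero).mp hsq
  exact (mul_neg_of_pos_of_neg (by positivity) (by linarith : β1 - 2 * β2 < 0)).ne

theorem hasDerivAt_T2p1_snd_eq_zero
    (hden : β1 * Δ * Sig0 * (β1 * Δ * Sig0 * (β1 ^ 2 - 4 * β1 * β2 + β2 ^ 2) +
      σu ^ 2 * (β1 - 4 * β2)) ≠ 0)
    (hcurve : Δ * Sig0 * β2 ^ 2 = Δ * Sig0 * β1 ^ 2 + σu ^ 2) :
    HasDerivAt (fun y => T2p1 Δ σu Sig0 β1 y) 0 β2 := by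
  set K := Δ * Sig0 with hK
  set P := K * β1 ^ 2 + σu ^ 2 with hP
  -- `T₁ = P (K β₁ y² - 2P y + β₁ P) / (K β₁ (K β₁ y² - 4P y + β₁ P))` as a function of `y = β₂`
  have h := hasDerivAt_div_quadratic_eq_zero (x := β2) (a := P * K * β1) (b := -2 * P ^ 2)
    (c := β1 * P ^ 2) (d := (K * β1) ^ 2) (e := -4 * P * K * β1) (f := K * β1 ^ 2 * P)
    (by convert hden using 1; simp only [hP, hK]; ring)
    (by linear_combination (-2 * P ^ 2 * K * β1 ^ 2) * hcurve)
  convert h using 2 with y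
  simp only [T2p1, hP, hK]
  ring

theorem hasDerivAt_T2p2_snd_eq_zero (hden : 2 * β2 * Δ * Sig0 ≠ 0)
    (hcurve : Δ * Sig0 * β2 ^ 2 = Δ * Sig0 * β1 ^ 2 + σu ^ 2) :
    HasDerivAt (fun y => T2p2 Δ σu Sig0 β1 y) 0 β2 := by
  have h := hasDerivAt_div_quadratic_eq_zero (a := Δ * Sig0) (b := 0)
    (c := Δ * Sig0 * β1 ^ 2 + σu ^ 2) (d := 0) (e := 2 * Δ * Sig0) (f := 0) (x := β2)
    (by convert hden using 1; ring) (by linear_combination (2 * Δ * Sig0) * hcurve)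
  convert h using 2 with y
  unfold T2p2
  ring

theorem differentiableAt_T2p
    (hden1 : β1 * Δ * Sig0 * (β1 * Δ * Sig0 * (β1 ^ 2 - 4 * β1 * β2 + β2 ^ 2) +
      σu ^ 2 * (β1 - 4 * β2)) ≠ 0)
    (hden2 : 2 * β2 * Δ * Sig0 ≠ 0) :
    DifferentiableAt ℝ
      (fun p : ℝ × ℝ => (T2p1 Δ σu Sig0 p.1 p.2, T2p2 Δ σu Sig0 p.1 p.2)) (β1, β2) := by
  unfold T2p1 T2p2
  fun_prop (disch := assumption)

theorem T2p_jacobian_second_column_zero_of_curve (hK : 0 < Δ * Sig0) (hβ1 : 0 < β1) (hβ2 : 0 < β2)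
    (hcurve : Δ * Sig0 * β2 ^ 2 = Δ * Sig0 * β1 ^ 2 + σu ^ 2) :
    DifferentiableAt ℝ
      (fun p : ℝ × ℝ => (T2p1 Δ σu Sig0 p.1 p.2, T2p2 Δ σu Sig0 p.1 p.2)) (β1, β2) ∧
    HasDerivAt (fun y => T2p1 Δ σu Sig0 β1 y) 0 β2 ∧
    HasDerivAt (fun y => T2p2 Δ σu Sig0 β1 y) 0 β2 := by
  have hden1 := T2p1_denom_ne_zero_of_curve hK hβ1 hβ2 hcurve
  have hden2 : 2 * β2 * Δ * Sig0 ≠ 0 := by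
    rw [mul_assoc (2 * β2)]
    exact mul_ne_zero (by positivity) hK.ne'
  exact ⟨differentiableAt_T2p hden1 hden2, hasDerivAt_T2p1_snd_eq_zero hden1 hcurve,
    hasDerivAt_T2p2_snd_eq_zero hden2 hcurve⟩

end Curve

theorem kyle_equilibrium_on_curve {Δ Sig0 : ℝ} (hΔ : 0 < Δ) (hSig : 0 < Sig0) (σu b1 : ℝ) :
    Δ * Sig0 * (1 * σu / √(Sig0 / (1 + b1 ^ 2) * Δ)) ^ 2 =
      Δ * Sig0 * (b1 * σu / √(Sig0 * Δ)) ^ 2 + σu ^ 2 := by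
  rw [div_pow, div_pow, Real.sq_sqrt (by positivity), Real.sq_sqrt (by positivity)]
  field_simp
  ring

theorem two_period_jacobian_second_column_zero_general (Δ σu Sig0 : ℝ) (hΔ : 0 < Δ)
    (hσ : 0 < σu) (hSig : 0 < Sig0) (b1 : ℝ) (hb1 : b1 ∈ Set.Ioo (0 : ℝ) 1) :
    let β1 : ℝ := b1 * σu / Real.sqrt (Sig0 * Δ)
    let β2 : ℝ := 1 * σu / Real.sqrt (Sig0 / (1 + b1 ^ 2) * Δ)
    DifferentiableAt ℝ
      (fun p : ℝ × ℝ => (T2p1 Δ σu Sig0 p.1 p.2, T2p2 Δ σu Sig0 p.1 p.2)) (β1, β2) ∧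
    HasDerivAt (fun y => T2p1 Δ σu Sig0 β1 y) 0 β2 ∧
    HasDerivAt (fun y => T2p2 Δ σu Sig0 β1 y) 0 β2 := by
  have hb1pos : 0 < b1 := hb1.1
  exact T2p_jacobian_second_column_zero_of_curve (by positivity) (by positivity) (by positivity)
    (kyle_equilibrium_on_curve hΔ hSig σu b1)

/-- At Kyle's two-period equilibrium `(β̂₁, β̂₂)`, the map `T` is differentiable and
the partial derivatives with respect to `β₂` of both coordinates vanish:
the second column of the Jacobian matrix of `T` at `(β̂₁, β̂₂)` is zero. -/
theorem two_period_jacobian_second_column_zero (Δ σu Sig0 : ℝ) (hΔ : 0 < Δ)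
    (hσ : 0 < σu) (hSig : 0 < Sig0) (b1 : ℝ) (hb1 : b1 ∈ Set.Ioo (0 : ℝ) 1)
    (hb1eq : 1 = b1 ^ 2 / ((1 - b1 ^ 2) ^ 2 * (1 + b1 ^ 2))) :
    let β1 : ℝ := b1 * σu / Real.sqrt (Sig0 * Δ)
    let β2 : ℝ := 1 * σu / Real.sqrt (Sig0 / (1 + b1 ^ 2) * Δ)
    DifferentiableAt ℝ
      (fun p : ℝ × ℝ => (T2p1 Δ σu Sig0 p.1 p.2, T2p2 Δ σu Sig0 p.1 p.2)) (β1, β2) ∧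
    HasDerivAt (fun y => T2p1 Δ σu Sig0 β1 y) 0 β2 ∧
    HasDerivAt (fun y => T2p2 Δ σu Sig0 β1 y) 0 β2 :=
  two_period_jacobian_second_column_zero_general Δ σu Sig0 hΔ hσ hSig b1 hb1
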